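/- arXiv:1406.3329 — 3 statements merged into one kernel-verified Lean document; each statement's English description precedes it below -/
import Mathlib

section
/- Let A be a centrohermitian matrix in M(m, m+n) over ℂ and let P_I(z_0,…,z_n) = det A_I(z_0,…,z_n), where A_I is the m×m submatrix of A(z_0,…,z_n) = A + z_0·I_0 + … + z_n·I_n formed by the columns indexed by I = {i_1 < … < i_m} ⊆ {1,…,m+n}. Then P_{Ī}(z_0,…,z_n) = conj(P_I(conj(z_n),…,conj(z_0))), where Ī = {m+n+1−i : i ∈ I}. -/
/-- The `n × n` exchange matrix: ones on the anti-diagonal, zeros elsewhere. -/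
noncomputable def Jex (n : ℕ) : Matrix (Fin n) (Fin n) ℂ :=
  Matrix.of fun i j => if j = i.rev then 1 else 0

/-- The shifted unit matrix `I_s = (δ_{s+i-j}) ∈ M(m, m+n)`. -/
noncomputable def shiftI (m n : ℕ) (s : ℕ) : Matrix (Fin m) (Fin (m + n)) ℂ :=
  Matrix.of fun i j => if (j : ℕ) = (i : ℕ) + s then 1 else 0

/-- `A(z_0, …, z_n) = A + z_0·I_0 + ⋯ + z_n·I_n`. -/
noncomputable def Amat {m n : ℕ} (A : Matrix (Fin m) (Fin (m + n)) ℂ)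
    (z : Fin (n + 1) → ℂ) : Matrix (Fin m) (Fin (m + n)) ℂ :=
  A + ∑ s : Fin (n + 1), z s • shiftI m n (s : ℕ)

/-- The generalized characteristic polynomial `P_I(z_0,…,z_n)`: the determinant of the
`m × m` submatrix of `A(z_0,…,z_n)` formed by the columns selected by the strictly
increasing map `cols : Fin m → Fin (m+n)`. -/
noncomputable def Pgc {m n : ℕ} (A : Matrix (Fin m) (Fin (m + n)) ℂ)
    (cols : Fin m → Fin (m + n)) (z : Fin (n + 1) → ℂ) : ℂ :=
  ((Amat A z).submatrix id cols).det

/-!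
Reversing both the row and the column order of `A(z)` maps the shifted unit matrix `I_s` to
`I_{n-s}`, and a centrohermitian `A` to its entrywise conjugate. Hence `A(z)` is the
row-and-column reversal of the conjugate of `A(z')` with `z'_s = conj z_{n-s}`. Selecting the
columns `Ī` of the former selects the columns `I` of the latter, and reversing all rows and
columns of a square matrix does not change its determinant.
-/

open Matrix

local notation "conj" => starRingEnd ℂ

theorem Jex_mul {m k : ℕ} (B : Matrix (Fin m) (Fin k) ℂ) :
    Jex m * B = B.submatrix Fin.rev id := by
  ext i j
  simp [Jex, mul_apply, ite_mul]

theorem mul_Jex {m k : ℕ} (B : Matrix (Fin m) (Fin k) ℂ) :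
    B * Jex k = B.submatrix id Fin.rev := by
  ext i j
  simp [Jex, mul_apply, Fin.rev_eq_iff.symm.eq]

theorem apply_eq_conj_apply_rev_of_centrohermitian {m k : ℕ} {A : Matrix (Fin m) (Fin k) ℂ}
    (hA : A = Jex m * A.map conj * Jex k) (i : Fin m) (j : Fin k) :
    A i j = conj (A i.rev j.rev) := by
  conv_lhs => rw [hA, Jex_mul, mul_Jex]
  rfl

theorem shiftI_rev_apply {m n : ℕ} (s : Fin (n + 1)) (i : Fin m) (j : Fin (m + n)) :
    shiftI m n s.rev i.rev j.rev = shiftI m n s i j := by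
  have := s.isLt
  simp only [shiftI, of_apply, Fin.val_rev]
  congr 1
  apply propext
  omega

theorem conj_shiftI_apply (m n s : ℕ) (i : Fin m) (j : Fin (m + n)) :
    conj (shiftI m n s i j) = shiftI m n s i j := by
  simp only [shiftI, of_apply]
  split_ifs <;> simp

theorem Amat_eq_submatrix_rev_map_conj {m n : ℕ} {A : Matrix (Fin m) (Fin (m + n)) ℂ}
    (hA : A = Jex m * A.map conj * Jex (m + n)) (z : Fin (n + 1) → ℂ) :
    Amat A z = ((Amat A fun s => conj (z s.rev)).map conj).submatrix Fin.rev Fin.rev := by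
  ext i j
  simp only [Amat, submatrix_apply, map_apply, Matrix.add_apply, Matrix.sum_apply,
    Matrix.smul_apply, smul_eq_mul, map_add, map_sum]
  rw [apply_eq_conj_apply_rev_of_centrohermitian hA i j]
  congr 1
  refine Fintype.sum_equiv Fin.revPerm _ _ fun s => ?_
  rw [Fin.revPerm_apply, map_mul, conj_shiftI_apply, Fin.rev_rev, Complex.conj_conj,
    shiftI_rev_apply]

theorem stmt5_general (m n : ℕ) (A : Matrix (Fin m) (Fin (m + n)) ℂ)
    (hA : A = Jex m * A.map (starRingEnd ℂ) * Jex (m + n))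
    (cols : Fin m → Fin (m + n))
    (z : Fin (n + 1) → ℂ) :
    Pgc A (fun i => (cols i.rev).rev) z =
      (starRingEnd ℂ) (Pgc A cols (fun s => (starRingEnd ℂ) (z s.rev))) := by
  have hsub : (Amat A z).submatrix id (fun i => (cols i.rev).rev) =
      (((Amat A fun s => conj (z s.rev)).submatrix id cols).map conj).submatrix
        Fin.revPerm Fin.revPerm := by
    rw [Amat_eq_submatrix_rev_map_conj hA z]
    ext i j
    simp
  rw [Pgc, hsub, det_submatrix_equiv_self, Pgc, RingHom.map_det]
  rfl

/-- For a centrohermitian `A ∈ M(m, m+n)`,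
`P_{Ī}(z_0,…,z_n) = conj (P_I(conj z_n, …, conj z_0))`, where `Ī = {m+n+1−i : i ∈ I}`
(given in 0-indexed form by `i ↦ (cols i.rev).rev`). -/
theorem stmt5 (m n : ℕ) (A : Matrix (Fin m) (Fin (m + n)) ℂ)
    (hA : A = Jex m * A.map (starRingEnd ℂ) * Jex (m + n))
    (cols : Fin m → Fin (m + n)) (hcols : StrictMono cols)
    (z : Fin (n + 1) → ℂ) :
    Pgc A (fun i => (cols i.rev).rev) z =
      (starRingEnd ℂ) (Pgc A cols (fun s => (starRingEnd ℂ) (z s.rev))) :=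
  stmt5_general m n A hA cols z
end

section
/- With P^m_k as before (determinants of the matrix A^c_{m,m+1}(z,z̄) minus one column), the identity P^m_1(z, z̄) = z · P^{m−1}_1(z, z̄) − c · P^{m−1}_2(z, z̄) − |c|² · P^{m−2}_0(z, z̄) holds for all m ≥ 2. -/
/-- The `m × (m+1)` banded Toeplitz matrix `A^c_{m,m+1}(z, z̄)`: main diagonal `z`,
superdiagonal `conj z`, second superdiagonal `conj c`, subdiagonal `c`. -/
noncomputable def Amc (c z : ℂ) (m : ℕ) : Matrix (Fin m) (Fin (m + 1)) ℂ :=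
  Matrix.of fun i j =>
    if (j : ℕ) = (i : ℕ) then z
    else if (j : ℕ) = (i : ℕ) + 1 then (starRingEnd ℂ) z
    else if (j : ℕ) = (i : ℕ) + 2 then (starRingEnd ℂ) c
    else if (i : ℕ) = (j : ℕ) + 1 then c
    else 0

/-- The generalized characteristic polynomial `P^m_k(z, z̄)`: the determinant of the
`m × m` matrix obtained from `A^c_{m,m+1}(z, z̄)` by deleting its `(m−k)`-th column
(columns indexed `0, …, m`), so that `P^m_k` is monic with leading term `z^{m−k} z̄^k`.
By convention `P^m_k = 0` when `m < 0`, `k < 0` or `k > m`. -/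
noncomputable def Pdet (c z : ℂ) (m k : ℤ) : ℂ :=
  if h : 0 ≤ m ∧ 0 ≤ k ∧ k ≤ m then
    ((Amc c z m.toNat).submatrix id
      (Fin.succAbove ⟨(m - k).toNat, by omega⟩)).det
  else 0

/-!
Expanding `P^m_1` along its last column gives `P^m_1 = z̄ P^{m-1}_0 - |c|² P^{m-2}_0`.
For the other half, pair the last row `(0, …, 0, c, z, z̄)` of `A_{n,n+1}` with the signed
maximal minors of the same matrix: this is the Laplace expansion of a determinant with a repeated
row, so `z̄ P^n_0 - z P^n_1 + c P^n_2 = 0`.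
-/

open Matrix ComplexConjugate

namespace Matrix

variable {R : Type*} [CommRing R]

theorem sum_neg_one_pow_mul_det_submatrix_succAbove {n : ℕ}
    (A : Matrix (Fin n) (Fin (n + 1)) R) (i : Fin n) :
    ∑ j : Fin (n + 1), (-1) ^ (j : ℕ) * A i j * (A.submatrix id j.succAbove).det = 0 := by
  let M : Matrix (Fin (n + 1)) (Fin (n + 1)) R := Matrix.of (vecCons (A i) A)
  have hM : M.det = 0 := det_zero_of_row_eq (Fin.succ_ne_zero i).symm rfl
  have hminor (j : Fin (n + 1)) : M.submatrix Fin.succ j.succAbove = A.submatrix id j.succAbove :=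
    rfl
  rw [det_succ_row_zero] at hM
  simp only [hminor] at hM
  exact hM

theorem det_eq_mul_det_of_col_last {n : ℕ} (M : Matrix (Fin (n + 1)) (Fin (n + 1)) R)
    (h : ∀ i : Fin n, M i.castSucc (Fin.last n) = 0) :
    M.det = M (Fin.last n) (Fin.last n) * (M.submatrix Fin.castSucc Fin.castSucc).det := by
  rw [det_succ_column M (Fin.last n), Fin.sum_univ_castSucc]
  simp [h, ← two_mul, pow_mul]

theorem det_eq_mul_det_of_row_last {n : ℕ} (M : Matrix (Fin (n + 1)) (Fin (n + 1)) R)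
    (h : ∀ j : Fin n, M (Fin.last n) j.castSucc = 0) :
    M.det = M (Fin.last n) (Fin.last n) * (M.submatrix Fin.castSucc Fin.castSucc).det := by
  rw [← det_transpose, det_eq_mul_det_of_col_last Mᵀ h, ← transpose_submatrix, det_transpose,
    transpose_apply]

end Matrix

section Amc

variable (c z : ℂ)

lemma Amc_apply_congr {m m' : ℕ} {i : Fin m} {j : Fin (m + 1)} {i' : Fin m'} {j' : Fin (m' + 1)}
    (hi : (i : ℕ) = i') (hj : (j : ℕ) = j') : Amc c z m i j = Amc c z m' i' j' := by
  simp [Amc, hi, hj]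

lemma Amc_apply_eq_zero {m : ℕ} {i : Fin m} {j : Fin (m + 1)}
    (h : (j : ℕ) + 1 < i ∨ (i : ℕ) + 2 < j) : Amc c z m i j = 0 := by
  simp only [Amc, of_apply]
  split_ifs <;> first | rfl | omega

lemma Pdet_of_lt {n k : ℤ} (h : n < k) : Pdet c z n k = 0 := by
  rw [Pdet, dif_neg (by omega)]

lemma det_Amc_submatrix_succAbove (n : ℕ) (j : Fin (n + 1)) :
    ((Amc c z n).submatrix id j.succAbove).det = Pdet c z n (n - j : ℕ) := by
  rw [Pdet, dif_pos (by omega)]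
  congr
  ext
  simp
  omega

lemma det_Amc_submatrix_castSucc (n : ℕ) :
    ((Amc c z n).submatrix id Fin.castSucc).det = Pdet c z n 0 := by
  rw [← Fin.succAbove_last, det_Amc_submatrix_succAbove]
  simp

/-- The submatrix keeps all rows but row `n` and the first `n + 1` columns; its last row is
`(0, …, 0, c)`. -/
lemma det_Amc_submatrix_succAbove_castSucc (n : ℕ) :
    ((Amc c z (n + 2)).submatrix (Fin.last n).castSucc.succAbove
      (Fin.castSucc ∘ Fin.castSucc)).det = c * Pdet c z n 0 := by
  rw [det_eq_mul_det_of_row_last, ← det_Amc_submatrix_castSucc]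
  · congr 1
    · simp [Amc, add_assoc]
    · congr 1
      ext i j
      exact Amc_apply_congr c z (by simp) (by simp)
  · intro j
    exact Amc_apply_eq_zero c z (by simp)

lemma Pdet_add_two_one (n : ℕ) :
    Pdet c z (n + 2 : ℕ) 1 = conj z * Pdet c z (n + 1 : ℕ) 0 - conj c * c * Pdet c z n 0 := by
  -- expand along the last column, whose only nonzero entries are `conj c` and `conj z`
  set N := (Amc c z (n + 2)).submatrix id (Fin.last (n + 1)).castSucc.succAbove
  have hP : Pdet c z (n + 2 : ℕ) 1 = N.det := by
    rw [det_Amc_submatrix_succAbove]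
    simp
  have hN (i j : Fin (n + 2)) :
      N i j = Amc c z (n + 2) i ((Fin.last (n + 1)).castSucc.succAbove j) := rfl
  have hcastSucc (j : Fin (n + 1)) :
      (Fin.last (n + 1)).castSucc.succAbove j.castSucc = j.castSucc.castSucc :=
    Fin.succAbove_castSucc_of_lt _ _ (Fin.castSucc_lt_last j)
  have hcol (i : Fin n) : N i.castSucc.castSucc (Fin.last _) = 0 :=
    Amc_apply_eq_zero c z (by simp)
  have hNz : N (Fin.last _) (Fin.last _) = conj z := by simp [hN, Amc]
  have hNc : N (Fin.last n).castSucc (Fin.last _) = conj c := by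
    simp [hN, Amc, add_assoc]
  have hlast :
      N.submatrix Fin.castSucc Fin.castSucc = (Amc c z (n + 1)).submatrix id Fin.castSucc := by
    ext i j
    exact Amc_apply_congr c z rfl (by simp [hcastSucc])
  have hskip : N.submatrix (Fin.last n).castSucc.succAbove Fin.castSucc =
      (Amc c z (n + 2)).submatrix (Fin.last n).castSucc.succAbove
        (Fin.castSucc ∘ Fin.castSucc) := by
    ext i j
    simp [hN, hcastSucc]
  rw [hP, det_succ_column N (Fin.last _), Fin.sum_univ_castSucc, Fin.sum_univ_castSucc]
  simp only [hcol, hNz, hNc, mul_zero, zero_mul, Finset.sum_const_zero, zero_add, Fin.val_castSucc,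
    Fin.val_last, Fin.succAbove_last, hlast, hskip, det_Amc_submatrix_castSucc,
    det_Amc_submatrix_succAbove_castSucc]
  rw [Odd.neg_one_pow ⟨n, by ring⟩, Even.neg_one_pow ⟨n + 1, rfl⟩]
  ring

theorem conj_mul_Pdet_add_one_zero (n : ℕ) :
    conj z * Pdet c z (n + 1 : ℕ) 0 =
      z * Pdet c z (n + 1 : ℕ) 1 - c * Pdet c z (n + 1 : ℕ) 2 := by
  -- the last row of `Amc c z (n + 1)` is `(0, …, 0, c, z, conj z)`
  have key := sum_neg_one_pow_mul_det_submatrix_succAbove (Amc c z (n + 1)) (Fin.last n)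
  simp only [det_Amc_submatrix_succAbove] at key
  rw [Fin.sum_univ_castSucc, Fin.sum_univ_castSucc] at key
  simp only [Fin.val_castSucc, Fin.val_last] at key
  have hrest : ∑ j : Fin n, (-1) ^ (j : ℕ) * Amc c z (n + 1) (Fin.last n) j.castSucc.castSucc *
      Pdet c z (n + 1 : ℕ) (n + 1 - j : ℕ) = (-1) ^ (n + 1) * c * Pdet c z (n + 1 : ℕ) 2 := by
    cases n with
    | zero => simp [Pdet_of_lt]
    | succ k =>
      rw [Fin.sum_univ_castSucc, Finset.sum_eq_zero fun j _ => by
        rw [Amc_apply_eq_zero c z (by simp), mul_zero, zero_mul]]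
      have hc : Amc c z (k + 2) (Fin.last (k + 1)) (Fin.last k).castSucc.castSucc = c := by
        simp [Amc, add_assoc]
      rw [zero_add, hc, Fin.val_last, show k + 1 + 1 - k = 2 by omega]
      push_cast
      ring
  have hz : Amc c z (n + 1) (Fin.last n) (Fin.last n).castSucc = z := by simp [Amc]
  have hzbar : Amc c z (n + 1) (Fin.last n) (Fin.last (n + 1)) = conj z := by simp [Amc]
  rw [hrest, hz, hzbar, Nat.add_sub_cancel_left, Nat.sub_self, Nat.cast_one,
    Nat.cast_zero] at key
  apply mul_left_cancel₀ (pow_ne_zero n (neg_ne_zero.mpr one_ne_zero) : (-1 : ℂ) ^ n ≠ 0)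
  linear_combination -key

end Amc

/-- `P^m_1 = z·P^{m−1}_1 − c·P^{m−1}_2 − |c|²·P^{m−2}_0` for all `m ≥ 2`. -/
theorem stmt9 (c z : ℂ) (m : ℤ) (hm : 2 ≤ m) :
    Pdet c z m 1 = z * Pdet c z (m - 1) 1 - c * Pdet c z (m - 1) 2 -
      (Complex.normSq c : ℂ) * Pdet c z (m - 2) 0 := by
  obtain ⟨n, rfl⟩ : ∃ n : ℕ, m = (n + 2 : ℕ) := ⟨(m - 2).toNat, by omega⟩
  have h1 : ((n + 2 : ℕ) : ℤ) - 1 = (n + 1 : ℕ) := by push_cast; ring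
  have h2 : ((n + 2 : ℕ) : ℤ) - 2 = n := by push_cast; ring
  rw [h1, h2, Pdet_add_two_one, Complex.normSq_eq_conj_mul_self]
  linear_combination conj_mul_Pdet_add_one_zero c z n
end

section
/- The polynomials P^m_k (characteristic polynomials of the banded Toeplitz matrix A^c_{m,m+1}) satisfy the vector three-term relation z·𝐏_m = [I_m 0]·𝐏_{m+1} + β_m·𝐏_m + γ_m·𝐏_{m−1}, where 𝐏_m = (P^m_0,…,P^m_m)^t, β_m is the (m+1)×(m+1) matrix with c on the superdiagonal and zeros elsewhere, and γ_m is the (m+1)×m matrix with zero first row and |c|² on the subdiagonal positions (i+1, i). -/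
/-!
The matrix of `P^n_k` has first row `(z, z̄, c̄, 0, …)` with column `n - k` removed, and
deleting that row leaves first columns whose only entry is `c`. Expanding along them gives
`P^{m+2}_k = z P^{m+1}_k - c z̄ P^m_k + c² c̄ P^{m-1}_k` for `k ≤ m`, and
`P^{m+1}_m = z P^m_m - |c|² P^{m-1}_{m-1}` when the deleted column is `1`.
Reversing rows and columns conjugates `A^c_{m,m+1}` entrywise and moves the deleted column `d`
to `m - d`, so `conj P^m_k = P^m_{m-k}`. The relation at `(m + 1, k)` with `k ≤ m` is the first
recurrence plus `c` times the conjugate of the relation at `(m, m - k)`, so it follows by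
induction on `m`, the diagonal cases `k = m` being the second recurrence.
-/

open Matrix

lemma Fin.val_succAbove {n : ℕ} (p : Fin (n + 1)) (i : Fin n) :
    (p.succAbove i : ℕ) = if (i : ℕ) < p then (i : ℕ) else (i : ℕ) + 1 := by
  rcases lt_or_ge (i : ℕ) p with h | h
  · rw [Fin.succAbove_of_castSucc_lt _ _ h, if_pos h]; rfl
  · rw [Fin.succAbove_of_le_castSucc _ _ h, if_neg (by omega)]; rfl

lemma Fin.sum_ite_mul_of_iff {R : Type*} [Semiring R] {n : ℕ} (p : Fin n → Prop)
    [DecidablePred p] (t : ℤ) (hp : ∀ j, p j ↔ ((j : ℕ) : ℤ) = t) (a : R) (f : ℤ → R)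
    (hf : ¬(0 ≤ t ∧ t < n) → f t = 0) :
    ∑ j, (if p j then a else 0) * f ((j : ℕ) : ℤ) = a * f t := by
  by_cases ht : 0 ≤ t ∧ t < n
  · lift t to ℕ using ht.1
    have hs : t < n := by exact_mod_cast ht.2
    rw [Finset.sum_eq_single ⟨t, hs⟩ (fun j _ hj => by
        rw [if_neg (by rw [hp]; exact fun h => hj (Fin.ext (by exact_mod_cast h))), zero_mul])
      (by simp), if_pos (by rw [hp])]
  · rw [hf ht, mul_zero]
    exact Finset.sum_eq_zero fun j _ => by rw [if_neg (by rw [hp]; omega), zero_mul]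

theorem Matrix.det_eq_mul_det_succ_of_col_zero {R : Type*} [CommRing R] {n : ℕ}
    (M : Matrix (Fin (n + 1)) (Fin (n + 1)) R) (h : ∀ i : Fin n, M i.succ 0 = 0) :
    M.det = M 0 0 * (M.submatrix Fin.succ Fin.succ).det := by
  rw [det_succ_column_zero, Fin.sum_univ_succ]
  simp [h]

section
variable (c z : ℂ)

lemma Amc_apply {n : ℕ} (i : Fin n) (j : Fin (n + 1)) :
    Amc c z n i j =
      if (j : ℕ) = i then z
      else if (j : ℕ) = i + 1 then starRingEnd ℂ z
      else if (j : ℕ) = i + 2 then starRingEnd ℂ c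
      else if (i : ℕ) = j + 1 then c
      else 0 := rfl

lemma Amc_map_conj (n : ℕ) :
    (Amc c z n).map (starRingEnd ℂ) = (Amc c z n).submatrix Fin.rev Fin.rev := by
  ext i j
  simp only [map_apply, submatrix_apply, Amc_apply, Fin.val_rev, apply_ite (starRingEnd ℂ),
    Complex.conj_conj, map_zero]
  grind

noncomputable def amcMinor (n : ℕ) (d : Fin (n + 1)) : ℂ :=
  ((Amc c z n).submatrix id d.succAbove).det

lemma conj_amcMinor (n : ℕ) (d : Fin (n + 1)) :
    starRingEnd ℂ (amcMinor c z n d) = amcMinor c z n d.rev := by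
  have hrev : Fin.rev ∘ d.succAbove = d.rev.succAbove ∘ Fin.rev :=
    funext (Fin.rev_succAbove d)
  rw [amcMinor, RingHom.map_det, RingHom.mapMatrix_apply, ← submatrix_map, Amc_map_conj,
    submatrix_submatrix, hrev, ← submatrix_submatrix]
  exact det_submatrix_equiv_self Fin.revPerm ((Amc c z n).submatrix id d.rev.succAbove)

lemma amcMinor_zero_zero : amcMinor c z 0 0 = 1 := by
  simp [amcMinor]

lemma amcMinor_one_one : amcMinor c z 1 1 = z := by
  simp [amcMinor, Amc_apply]

lemma amcMinor_add_two_one (n : ℕ) :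
    amcMinor c z (n + 2) (0 : Fin (n + 2)).succ =
      z * amcMinor c z (n + 1) 0 - starRingEnd ℂ c * (c * amcMinor c z n 0) := by
  set B := (Amc c z (n + 2)).submatrix id (0 : Fin (n + 2)).succ.succAbove
  have h0 : B.submatrix Fin.succ (Fin.succAbove 0) =
      (Amc c z (n + 1)).submatrix id (0 : Fin (n + 2)).succAbove := by
    ext i j
    simp only [B, submatrix_apply, id, Amc_apply, Fin.val_succAbove, Fin.val_succ, Fin.val_zero]
    grind
  have h1 : (B.submatrix Fin.succ (Fin.succ 0).succAbove).submatrix Fin.succ Fin.succ =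
      (Amc c z n).submatrix id (0 : Fin (n + 1)).succAbove := by
    ext i j
    simp only [B, submatrix_apply, id, Amc_apply, Fin.val_succAbove, Fin.val_succ, Fin.val_zero]
    grind
  rw [amcMinor, det_succ_row_zero, Fin.sum_univ_succ, Fin.sum_univ_succ,
    Finset.sum_eq_zero fun j _ => by
      simp only [submatrix_apply, id, Amc_apply, Fin.val_succAbove, Fin.val_succ, Fin.val_zero]
      grind,
    det_eq_mul_det_succ_of_col_zero (B.submatrix _ (Fin.succ 0).succAbove), h0, h1]
  · simp only [B, submatrix_apply, id, Amc_apply, Fin.val_succAbove, Fin.val_succ, Fin.val_zero]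
    norm_num [amcMinor]
    ring
  · intro i
    simp only [B, submatrix_apply, id, Amc_apply, Fin.val_succAbove, Fin.val_succ, Fin.val_zero]
    grind

lemma amcMinor_add_two_two (n : ℕ) :
    amcMinor c z (n + 2) (0 : Fin (n + 1)).succ.succ =
      z * amcMinor c z (n + 1) (0 : Fin (n + 1)).succ
      - starRingEnd ℂ z * (c * amcMinor c z n 0) := by
  set B := (Amc c z (n + 2)).submatrix id (0 : Fin (n + 1)).succ.succ.succAbove
  have h0 : B.submatrix Fin.succ (Fin.succAbove 0) =
      (Amc c z (n + 1)).submatrix id (0 : Fin (n + 1)).succ.succAbove := by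
    ext i j
    simp only [B, submatrix_apply, id, Amc_apply, Fin.val_succAbove, Fin.val_succ, Fin.val_zero]
    grind
  have h1 : (B.submatrix Fin.succ (Fin.succ 0).succAbove).submatrix Fin.succ Fin.succ =
      (Amc c z n).submatrix id (0 : Fin (n + 1)).succAbove := by
    ext i j
    simp only [B, submatrix_apply, id, Amc_apply, Fin.val_succAbove, Fin.val_succ, Fin.val_zero]
    grind
  rw [amcMinor, det_succ_row_zero, Fin.sum_univ_succ, Fin.sum_univ_succ,
    Finset.sum_eq_zero fun j _ => by
      simp only [submatrix_apply, id, Amc_apply, Fin.val_succAbove, Fin.val_succ, Fin.val_zero]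
      grind,
    det_eq_mul_det_succ_of_col_zero (B.submatrix _ (Fin.succ 0).succAbove), h0, h1]
  · simp only [B, submatrix_apply, id, Amc_apply, Fin.val_succAbove, Fin.val_succ, Fin.val_zero]
    norm_num [amcMinor]
    ring
  · intro i
    simp only [B, submatrix_apply, id, Amc_apply, Fin.val_succAbove, Fin.val_succ, Fin.val_zero]
    grind

lemma amcMinor_add_three (n : ℕ) (e : Fin (n + 1)) :
    amcMinor c z (n + 3) e.succ.succ.succ =
      z * amcMinor c z (n + 2) e.succ.succ
      - starRingEnd ℂ z * (c * amcMinor c z (n + 1) e.succ)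
      + starRingEnd ℂ c * (c * (c * amcMinor c z n e)) := by
  set B := (Amc c z (n + 3)).submatrix id e.succ.succ.succ.succAbove
  have h0 : B.submatrix Fin.succ (Fin.succAbove 0) =
      (Amc c z (n + 2)).submatrix id e.succ.succ.succAbove := by
    ext i j
    simp only [B, submatrix_apply, id, Amc_apply, Fin.val_succAbove, Fin.val_succ, Fin.val_zero]
    grind
  have h1 : (B.submatrix Fin.succ (Fin.succ 0).succAbove).submatrix Fin.succ Fin.succ =
      (Amc c z (n + 1)).submatrix id e.succ.succAbove := by
    ext i j
    simp only [B, submatrix_apply, id, Amc_apply, Fin.val_succAbove, Fin.val_succ, Fin.val_zero]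
    grind
  have h2 : ((B.submatrix Fin.succ (Fin.succ 0).succ.succAbove).submatrix Fin.succ
      Fin.succ).submatrix Fin.succ Fin.succ = (Amc c z n).submatrix id e.succAbove := by
    ext i j
    simp only [B, submatrix_apply, id, Amc_apply, Fin.val_succAbove, Fin.val_succ, Fin.val_zero]
    grind
  rw [amcMinor, det_succ_row_zero, Fin.sum_univ_succ, Fin.sum_univ_succ, Fin.sum_univ_succ,
    Finset.sum_eq_zero fun j _ => by
      simp only [submatrix_apply, id, Amc_apply, Fin.val_succAbove, Fin.val_succ, Fin.val_zero]
      grind,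
    det_eq_mul_det_succ_of_col_zero (B.submatrix _ (Fin.succ 0).succAbove),
    det_eq_mul_det_succ_of_col_zero (B.submatrix _ (Fin.succ (Fin.succ 0)).succAbove),
    det_eq_mul_det_succ_of_col_zero
      ((B.submatrix _ (Fin.succ (Fin.succ 0)).succAbove).submatrix _ _), h0, h1, h2]
  · simp only [B, submatrix_apply, id, Amc_apply, Fin.val_succAbove, Fin.val_succ, Fin.val_zero]
    norm_num [amcMinor]
    ring
  all_goals
    intro i
    simp only [B, submatrix_apply, id, Amc_apply, Fin.val_succAbove, Fin.val_succ, Fin.val_zero]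
    grind

lemma Pdet_eq_amcMinor {m k : ℤ} (n : ℕ) (d : Fin (n + 1)) (hm : m = n) (hk : k + d = m) :
    Pdet c z m k = amcMinor c z n d := by
  subst hm
  rw [Pdet, dif_pos (by omega), amcMinor]
  congr 3
  ext
  simp only [Int.toNat_natCast]
  omega

lemma Pdet_eq_zero {m k : ℤ} (h : ¬(0 ≤ m ∧ 0 ≤ k ∧ k ≤ m)) : Pdet c z m k = 0 :=
  dif_neg h

lemma conj_Pdet {m k l : ℤ} (h : k + l = m) :
    starRingEnd ℂ (Pdet c z m k) = Pdet c z m l := by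
  by_cases hk : 0 ≤ m ∧ 0 ≤ k ∧ k ≤ m
  · lift m to ℕ using hk.1
    let d : Fin (m + 1) := ⟨(m - k).toNat, by omega⟩
    rw [Pdet_eq_amcMinor c z m d rfl (by simp only [d, Int.ofNat_toNat]; omega), conj_amcMinor,
      Pdet_eq_amcMinor c z m d.rev rfl (by simp only [d, Fin.val_rev]; omega)]
  · rw [Pdet_eq_zero c z hk, Pdet_eq_zero c z (by omega), map_zero]

lemma Pdet_add_one_self {m : ℤ} (hm : 0 ≤ m) :
    Pdet c z (m + 1) m =
      z * Pdet c z m m - starRingEnd ℂ c * (c * Pdet c z (m - 1) (m - 1)) := by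
  lift m to ℕ using hm
  rcases m with _ | n
  · rw [Nat.cast_zero, zero_add, zero_sub, Pdet_eq_zero c z (m := -1) (k := -1) (by omega),
      Pdet_eq_amcMinor c z 1 1 (by simp) (by simp), Pdet_eq_amcMinor c z 0 0 (by simp) (by simp),
      amcMinor_one_one, amcMinor_zero_zero]
    ring
  · convert amcMinor_add_two_one c z n <;> apply Pdet_eq_amcMinor <;>
      push_cast [Fin.val_succ, Fin.val_zero] <;> ring

lemma Pdet_add_two {m k : ℤ} (hk : 0 ≤ k) (hkm : k ≤ m) :
    Pdet c z (m + 2) k =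
      z * Pdet c z (m + 1) k - starRingEnd ℂ z * (c * Pdet c z m k)
      + starRingEnd ℂ c * (c * (c * Pdet c z (m - 1) k)) := by
  lift m to ℕ using hk.trans hkm
  rcases hkm.eq_or_lt with rfl | hlt
  · rw [Pdet_eq_zero c z (m := m - 1) (by omega), mul_zero, mul_zero, mul_zero, add_zero]
    convert amcMinor_add_two_two c z m <;> apply Pdet_eq_amcMinor <;>
      push_cast [Fin.val_succ, Fin.val_zero] <;> ring
  · obtain ⟨n, rfl⟩ : ∃ n : ℕ, m = n + 1 := ⟨m - 1, by omega⟩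
    let e : Fin (n + 1) := ⟨(n - k).toNat, by omega⟩
    convert amcMinor_add_three c z n e <;> apply Pdet_eq_amcMinor <;>
      simp only [e, Fin.val_succ, Nat.cast_add, Nat.cast_one, Nat.cast_ofNat, Int.ofNat_toNat] <;>
      omega

theorem Pdet_three_term {m k : ℤ} (hk : 0 ≤ k) (hkm : k ≤ m) :
    z * Pdet c z m k = Pdet c z (m + 1) k + c * Pdet c z m (k + 1)
      + Complex.normSq c * Pdet c z (m - 1) (k - 1) := by
  have diagonal {m : ℤ} (hm : 0 ≤ m) : z * Pdet c z m m = Pdet c z (m + 1) m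
      + c * Pdet c z m (m + 1) + Complex.normSq c * Pdet c z (m - 1) (m - 1) := by
    rw [Pdet_eq_zero c z (k := m + 1) (by omega), Pdet_add_one_self c z hm, ← Complex.mul_conj]
    ring
  lift m to ℕ using hk.trans hkm
  induction m generalizing k with
  | zero =>
    obtain rfl : k = 0 := by omega
    exact diagonal le_rfl
  | succ n ih =>
    rcases hkm.eq_or_lt with rfl | hlt
    · exact diagonal hk
    have h := congrArg (starRingEnd ℂ) (ih (k := n - k) (by omega) (by omega))
    rw [map_add, map_add, map_mul, map_mul, map_mul, Complex.conj_ofReal,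
      conj_Pdet c z (show (n : ℤ) - k + k = n by ring),
      conj_Pdet c z (show (n : ℤ) - k + (k + 1) = n + 1 by ring),
      conj_Pdet c z (show (n : ℤ) - k + 1 + (k - 1) = n by ring),
      conj_Pdet c z (show (n : ℤ) - k - 1 + k = n - 1 by ring), ← Complex.mul_conj] at h
    push_cast
    rw [show (n : ℤ) + 1 + 1 = n + 2 by ring, add_sub_cancel_right,
      Pdet_add_two c z hk (by omega), ← Complex.mul_conj]
    linear_combination c * h

end

/-- The vector three-term relation
`z·𝐏_m = [I_m 0]·𝐏_{m+1} + β_m·𝐏_m + γ_m·𝐏_{m−1}`, where `𝐏_m = (P^m_0,…,P^m_m)ᵗ`,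
`β_m` is the `(m+1)×(m+1)` matrix with `c` on the superdiagonal and zeros elsewhere,
and `γ_m` is the `(m+1)×m` matrix with zero first row and `|c|²` in positions `(i+1, i)`. -/
theorem stmt10 (c z : ℂ) (m : ℕ) :
    (fun k : Fin (m + 1) => z * Pdet c z (m : ℤ) (k : ℕ)) =
      (Matrix.of fun (k : Fin (m + 1)) (j : Fin (m + 2)) =>
          if (j : ℕ) = (k : ℕ) then (1 : ℂ) else 0).mulVec
        (fun j : Fin (m + 2) => Pdet c z ((m : ℤ) + 1) (j : ℕ))
      + (Matrix.of fun (k j : Fin (m + 1)) =>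
          if (j : ℕ) = (k : ℕ) + 1 then c else 0).mulVec
        (fun j : Fin (m + 1) => Pdet c z (m : ℤ) (j : ℕ))
      + (Matrix.of fun (k : Fin (m + 1)) (j : Fin m) =>
          if (k : ℕ) = (j : ℕ) + 1 then (Complex.normSq c : ℂ) else 0).mulVec
        (fun j : Fin m => Pdet c z ((m : ℤ) - 1) (j : ℕ)) := by
  funext k
  simp only [Pi.add_apply, mulVec, dotProduct, of_apply]
  rw [Pdet_three_term c z (m := m) (k := k) (by omega) (by omega), ← one_mul (Pdet c z (m + 1) k)]
  congr 2
  all_goals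
    symm
    apply Fin.sum_ite_mul_of_iff
    · intro j
      omega
    · intro h
      exact Pdet_eq_zero c z (by omega)
end
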